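/- Skew-self-adjointness of the subprincipal correction: let H be a complex Hilbert space and let P₀, Q₀ : ℝ → B(H) and P₁, Q₁ : ℝ² → B(H) be differentiable maps into the bounded operators on H such that, for all ξ ∈ ℝ and (s,ξ) ∈ ℝ²: P₀(ξ) and Q₀(ξ) are self-adjoint; P₁(s,ξ) and Q₁(s,ξ) are skew-adjoint (i.e. X* = −X); P₀(ξ)Q₀(ξ) = Q₀(ξ)P₀(ξ) = Id; and Q₁(s,ξ)P₀(ξ) + Q₀(ξ)P₁(s,ξ) = 0. Define 𝒞(s,ξ) := (2i)^{−1} ( (dQ₀/dξ)(ξ) · (∂P₁/∂s)(s,ξ) − (∂Q₁/∂s)(s,ξ) · (dP₀/dξ)(ξ) ) · Q₀(ξ). Then 𝒞(s,ξ) is skew-self-adjoint: 𝒞(s,ξ)* = −𝒞(s,ξ) for all (s,ξ). -/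

import Mathlib

open ContinuousLinearMap

noncomputable section

/-! Write `A = Q₀'(ξ)`, `B = ∂ₛP₁`, `C = ∂ₛQ₁`, `D = P₀'(ξ)`. Differentiating `P₀Q₀ = 1` gives
`P₀A = -DQ₀`, whose adjoint is `AP₀ = -Q₀D`; differentiating the cancellation identity in `s`
(where `P₀, Q₀` are constant) gives `CP₀ + Q₀B = 0`. These relations turn `(AB - CD)Q₀` into
`Q₀(DC - BA)`, which is its own adjoint because `A, D, Q₀` are self-adjoint and `B, C`
skew-adjoint. Multiplying a self-adjoint operator by the purely imaginary scalar `(2i)⁻¹`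
makes it skew-adjoint. -/

section Derivatives

variable {𝕜 : Type*} [NontriviallyNormedField 𝕜]

section Star

variable [StarRing 𝕜] [TrivialStar 𝕜] {F : Type*} [NormedAddCommGroup F] [NormedSpace 𝕜 F]
  [StarAddMonoid F] [StarModule 𝕜 F] [ContinuousStar F] {f : 𝕜 → F}

theorem isSelfAdjoint_deriv (hf : ∀ y, IsSelfAdjoint (f y)) (x : 𝕜) :
    IsSelfAdjoint (deriv f x) := by
  rw [IsSelfAdjoint, ← deriv.star]
  exact congrArg (deriv · x) (funext fun y => (hf y).star_eq)

theorem deriv_mem_skewAdjoint (hf : ∀ y, f y ∈ skewAdjoint F) (x : 𝕜) :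
    deriv f x ∈ skewAdjoint F := by
  rw [skewAdjoint.mem_iff, ← deriv.star, ← deriv.neg]
  exact congrArg (deriv · x) (funext fun y => skewAdjoint.mem_iff.mp (hf y))

end Star

theorem deriv_mul_add_mul_deriv_eq_zero {𝔸 : Type*} [NormedRing 𝔸] [NormedAlgebra 𝕜 𝔸]
    {f g : 𝕜 → 𝔸} {c : 𝔸} {x : 𝕜} (hf : DifferentiableAt 𝕜 f x) (hg : DifferentiableAt 𝕜 g x)
    (hfg : ∀ y, f y * g y = c) : deriv f x * g x + f x * deriv g x = 0 := by
  rw [← deriv_fun_mul hf hg, funext hfg, deriv_const]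

end Derivatives

section Algebra

variable {R : Type*} [Ring R] {P Q A B C D : R}

theorem mul_sub_mul_mul_eq_mul_mul_sub_mul (hPQ : P * Q = 1) (hPA : P * A = -(D * Q))
    (hAP : A * P = -(Q * D)) (hCB : C * P + Q * B = 0) :
    (A * B - C * D) * Q = Q * (D * C - B * A) := by
  have hQB : Q * B = -(C * P) := eq_neg_of_add_eq_zero_right hCB
  have hABQ : A * B * Q = Q * D * C :=
    calc A * B * Q = A * P * (Q * B) * Q := by rw [mul_assoc A P, ← mul_assoc P Q B, hPQ, one_mul]
      _ = -(A * P * C * (P * Q)) := by rw [hQB]; noncomm_ring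
      _ = Q * D * C := by rw [hPQ, hAP]; noncomm_ring
  have hCDQ : C * D * Q = Q * B * A :=
    calc C * D * Q = -(C * (P * A)) := by rw [hPA]; noncomm_ring
      _ = Q * B * A := by rw [← mul_assoc, eq_neg_of_add_eq_zero_left hCB]; noncomm_ring
  calc (A * B - C * D) * Q = A * B * Q - C * D * Q := sub_mul _ _ _
    _ = Q * (D * C - B * A) := by rw [hABQ, hCDQ]; noncomm_ring

variable [StarRing R]

theorem isSelfAdjoint_mul_sub_mul_mul (hP : IsSelfAdjoint P) (hQ : IsSelfAdjoint Q)
    (hA : IsSelfAdjoint A) (hD : IsSelfAdjoint D) (hB : B ∈ skewAdjoint R)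
    (hC : C ∈ skewAdjoint R) (hPQ : P * Q = 1) (hPA : P * A = -(D * Q))
    (hCB : C * P + Q * B = 0) : IsSelfAdjoint ((A * B - C * D) * Q) := by
  have hAP : A * P = -(Q * D) := by
    simpa only [star_mul, star_neg, hP.star_eq, hQ.star_eq, hA.star_eq, hD.star_eq]
      using congrArg star hPA
  calc star ((A * B - C * D) * Q) = Q * (D * C - B * A) := by
        simp only [star_mul, star_sub, hQ.star_eq, hA.star_eq, hD.star_eq,
          skewAdjoint.mem_iff.mp hB, skewAdjoint.mem_iff.mp hC]
        noncomm_ring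
    _ = (A * B - C * D) * Q := (mul_sub_mul_mul_eq_mul_mul_sub_mul hPQ hPA hAP hCB).symm

end Algebra

theorem skew_adjoint_subprincipal_correction_general
    {H : Type*} [NormedAddCommGroup H] [InnerProductSpace ℂ H] [CompleteSpace H]
    (P₀ Q₀ : ℝ → H →L[ℂ] H) (P₁ Q₁ : ℝ × ℝ → H →L[ℂ] H)
    (hP₀ : Differentiable ℝ P₀) (hQ₀ : Differentiable ℝ Q₀)
    (hP₁ : Differentiable ℝ P₁) (hQ₁ : Differentiable ℝ Q₁)
    (hP₀sa : ∀ ξ : ℝ, ContinuousLinearMap.adjoint (P₀ ξ) = P₀ ξ)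
    (hQ₀sa : ∀ ξ : ℝ, ContinuousLinearMap.adjoint (Q₀ ξ) = Q₀ ξ)
    (hP₁sk : ∀ p : ℝ × ℝ, ContinuousLinearMap.adjoint (P₁ p) = -P₁ p)
    (hQ₁sk : ∀ p : ℝ × ℝ, ContinuousLinearMap.adjoint (Q₁ p) = -Q₁ p)
    (hPQ : ∀ ξ : ℝ, (P₀ ξ).comp (Q₀ ξ) = ContinuousLinearMap.id ℂ H)
    (hcanc : ∀ s ξ : ℝ,
      (Q₁ (s, ξ)).comp (P₀ ξ) + (Q₀ ξ).comp (P₁ (s, ξ)) = 0) :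
    ∀ s ξ : ℝ,
      ContinuousLinearMap.adjoint
          (((2 * Complex.I)⁻¹ : ℂ) •
            (((deriv Q₀ ξ).comp (deriv (fun s' => P₁ (s', ξ)) s) -
              (deriv (fun s' => Q₁ (s', ξ)) s).comp (deriv P₀ ξ)).comp (Q₀ ξ)))
        = -(((2 * Complex.I)⁻¹ : ℂ) •
            (((deriv Q₀ ξ).comp (deriv (fun s' => P₁ (s', ξ)) s) -
              (deriv (fun s' => Q₁ (s', ξ)) s).comp (deriv P₀ ξ)).comp (Q₀ ξ))) := by
  intro s ξ
  have hP₀sa' : ∀ x, IsSelfAdjoint (P₀ x) := fun x => isSelfAdjoint_iff'.mpr (hP₀sa x)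
  have hQ₀sa' : ∀ x, IsSelfAdjoint (Q₀ x) := fun x => isSelfAdjoint_iff'.mpr (hQ₀sa x)
  have hP₁sk' : ∀ s', P₁ (s', ξ) ∈ skewAdjoint (H →L[ℂ] H) :=
    fun s' => skewAdjoint.mem_iff.mpr (hP₁sk _)
  have hQ₁sk' : ∀ s', Q₁ (s', ξ) ∈ skewAdjoint (H →L[ℂ] H) :=
    fun s' => skewAdjoint.mem_iff.mpr (hQ₁sk _)
  have hPA : P₀ ξ * deriv Q₀ ξ = -(deriv P₀ ξ * Q₀ ξ) :=
    eq_neg_of_add_eq_zero_right (deriv_mul_add_mul_deriv_eq_zero (hP₀ ξ) (hQ₀ ξ) hPQ)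
  have hCB :
      deriv (fun s' => Q₁ (s', ξ)) s * P₀ ξ + Q₀ ξ * deriv (fun s' => P₁ (s', ξ)) s = 0 := by
    rw [← deriv_mul_const (by fun_prop), ← deriv_const_mul _ (by fun_prop),
      ← deriv_fun_add (by fun_prop) (by fun_prop)]
    have hzero : (fun s' => Q₁ (s', ξ) * P₀ ξ + Q₀ ξ * P₁ (s', ξ)) = fun _ => 0 :=
      funext fun s' => hcanc s' ξ
    rw [hzero, deriv_const]
  have hM := isSelfAdjoint_mul_sub_mul_mul (hP₀sa' ξ) (hQ₀sa' ξ)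
    (isSelfAdjoint_deriv hQ₀sa' ξ) (isSelfAdjoint_deriv hP₀sa' ξ)
    (deriv_mem_skewAdjoint hP₁sk' s) (deriv_mem_skewAdjoint hQ₁sk' s) (hPQ ξ) hPA hCB
  have hI : ((2 * Complex.I)⁻¹ : ℂ) ∈ skewAdjoint ℂ := by
    rw [skewAdjoint.mem_iff]; simp
  exact skewAdjoint.mem_iff.mp (hM.smul_mem_skewAdjoint hI)

/-- Skew-self-adjointness of the subprincipal correction term
`𝒞(s,ξ) = (2i)⁻¹ ( (dQ₀/dξ)·(∂P₁/∂s) − (∂Q₁/∂s)·(dP₀/dξ) ) · Q₀(ξ)`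
built from Grushin symbols whose principal part does not depend on `s`. -/
theorem skew_adjoint_subprincipal_correction
    {H : Type*} [NormedAddCommGroup H] [InnerProductSpace ℂ H] [CompleteSpace H]
    (P₀ Q₀ : ℝ → H →L[ℂ] H) (P₁ Q₁ : ℝ × ℝ → H →L[ℂ] H)
    (hP₀ : Differentiable ℝ P₀) (hQ₀ : Differentiable ℝ Q₀)
    (hP₁ : Differentiable ℝ P₁) (hQ₁ : Differentiable ℝ Q₁)
    (hP₀sa : ∀ ξ : ℝ, ContinuousLinearMap.adjoint (P₀ ξ) = P₀ ξ)
    (hQ₀sa : ∀ ξ : ℝ, ContinuousLinearMap.adjoint (Q₀ ξ) = Q₀ ξ)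
    (hP₁sk : ∀ p : ℝ × ℝ, ContinuousLinearMap.adjoint (P₁ p) = -P₁ p)
    (hQ₁sk : ∀ p : ℝ × ℝ, ContinuousLinearMap.adjoint (Q₁ p) = -Q₁ p)
    (hPQ : ∀ ξ : ℝ, (P₀ ξ).comp (Q₀ ξ) = ContinuousLinearMap.id ℂ H)
    (hQP : ∀ ξ : ℝ, (Q₀ ξ).comp (P₀ ξ) = ContinuousLinearMap.id ℂ H)
    (hcanc : ∀ s ξ : ℝ,
      (Q₁ (s, ξ)).comp (P₀ ξ) + (Q₀ ξ).comp (P₁ (s, ξ)) = 0) :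
    ∀ s ξ : ℝ,
      ContinuousLinearMap.adjoint
          (((2 * Complex.I)⁻¹ : ℂ) •
            (((deriv Q₀ ξ).comp (deriv (fun s' => P₁ (s', ξ)) s) -
              (deriv (fun s' => Q₁ (s', ξ)) s).comp (deriv P₀ ξ)).comp (Q₀ ξ)))
        = -(((2 * Complex.I)⁻¹ : ℂ) •
            (((deriv Q₀ ξ).comp (deriv (fun s' => P₁ (s', ξ)) s) -
              (deriv (fun s' => Q₁ (s', ξ)) s).comp (deriv P₀ ξ)).comp (Q₀ ξ))) :=
  skew_adjoint_subprincipal_correction_general P₀ Q₀ P₁ Q₁ hP₀ hQ₀ hP₁ hQ₁ hP₀sa hQ₀sa hP₁sk hQ₁sk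
    hPQ hcanc
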